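/- Assume K has symmetric support. For every o ∈ 𝒳 and every t ≥ diam(𝒳)/4, the Lipschitz norm of the log-density satisfies ‖log(P_t(o,·)/π(·))‖_Lip ≤ 3 log(e/δ), where δ is the smallest non-zero entry of K. -/

import Mathlib

/-!
Write `P_t(o, ·) = e^{-t} F` with `F z = ∑ₙ tⁿ/n! Kⁿ(o, z)`. If `K z z' > 0`, then termwise
`F z' ≥ δ ∑_{n<M} t/(n+1) · tⁿ/n! Kⁿ(o, z)`, and for `M ≈ 15 t / δ` the discarded tail is at most
`F z / 25`, because `F z ≥ (δ/4)^{4t}` as soon as `dist(o, z) ≤ 4t`. Hence `F z ≤ e³ δ⁻² F z'`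
across every edge. Together with `π x ≥ δ^d π y` (stationarity along a path of length
`d = dist(y, x)`), `log (P_t(o, ·)/π)` changes by at most `3 log (e/δ)` per edge.
-/

open scoped Classical

noncomputable section

/-- `n`-th power of a kernel `K` on a finite set. -/
def matPow {X : Type*} [Fintype X] [DecidableEq X] (K : X → X → ℝ) : ℕ → X → X → ℝ
  | 0 => fun x y => if x = y then 1 else 0
  | n + 1 => fun x y => ∑ z, matPow K n x z * K z y

/-- `K` is a stochastic matrix with entries in `[0,1]` and rows summing to `1`. -/
def IsStochastic {X : Type*} [Fintype X] (K : X → X → ℝ) : Prop :=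
  (∀ x y, 0 ≤ K x y ∧ K x y ≤ 1) ∧ ∀ x, ∑ y, K x y = 1

/-- Irreducibility: any state can be reached from any state. -/
def IsIrreducibleMatrix {X : Type*} [Fintype X] [DecidableEq X] (K : X → X → ℝ) : Prop :=
  ∀ x y, ∃ n : ℕ, 0 < matPow K n x y

/-- `π` is the (positive) stationary probability vector of `K`. -/
def IsStationaryProb {X : Type*} [Fintype X] (K : X → X → ℝ) (π : X → ℝ) : Prop :=
  (∀ x, 0 < π x) ∧ (∑ x, π x = 1) ∧ ∀ y, ∑ x, π x * K x y = π y

/-- A probability vector on a finite set. -/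
def IsProbVector {X : Type*} [Fintype X] (μ : X → ℝ) : Prop :=
  (∀ x, 0 ≤ μ x) ∧ ∑ x, μ x = 1

/-- Continuous-time heat kernel `P_t(x,y) = e^{-t} ∑ t^n/n! Kⁿ(x,y)`. -/
def heatKernel {X : Type*} [Fintype X] [DecidableEq X] (K : X → X → ℝ) (t : ℝ) (x y : X) : ℝ :=
  Real.exp (-t) * ∑' n : ℕ, t ^ n / (Nat.factorial n : ℝ) * matPow K n x y

/-- Total variation distance between two vectors. -/
def dTV {X : Type*} [Fintype X] (μ ν : X → ℝ) : ℝ := (∑ x, |μ x - ν x|) / 2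

/-- Relative entropy (Kullback–Leibler divergence). -/
def dKL {X : Type*} [Fintype X] (μ ν : X → ℝ) : ℝ := ∑ x, μ x * Real.log (μ x / ν x)

/-- Varentropy. -/
def varKL {X : Type*} [Fintype X] (μ ν : X → ℝ) : ℝ :=
  ∑ x, μ x * (Real.log (μ x / ν x) - dKL μ ν) ^ 2

/-- Worst-case total variation distance to equilibrium at time `t`. -/
def worstTV {X : Type*} [Fintype X] [DecidableEq X] (K : X → X → ℝ) (π : X → ℝ) (t : ℝ) : ℝ :=
  sSup {v : ℝ | ∃ o : X, v = dTV (heatKernel K t o) π}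

/-- Worst-case relative entropy to equilibrium at time `t`. -/
def worstKL {X : Type*} [Fintype X] [DecidableEq X] (K : X → X → ℝ) (π : X → ℝ) (t : ℝ) : ℝ :=
  sSup {v : ℝ | ∃ o : X, v = dKL (heatKernel K t o) π}

/-- Worst-case varentropy at time `t`. -/
def worstVar {X : Type*} [Fintype X] [DecidableEq X] (K : X → X → ℝ) (π : X → ℝ) (t : ℝ) : ℝ :=
  sSup {v : ℝ | ∃ o : X, v = varKL (heatKernel K t o) π}

/-- Mixing time: first time the worst-case TV distance drops below `ε`. -/
def mixingTime {X : Type*} [Fintype X] [DecidableEq X] (K : X → X → ℝ) (π : X → ℝ) (ε : ℝ) : ℝ :=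
  sInf {t : ℝ | 0 ≤ t ∧ worstTV K π t ≤ ε}

/-- Variance of `f` with respect to `π`. -/
def varPi {X : Type*} [Fintype X] (π f : X → ℝ) : ℝ :=
  ∑ x, π x * (f x - ∑ y, π y * f y) ^ 2

/-- Poincaré constant: the largest `γ` with `γ·Var_π(f) ≤ (1/2)∑ π(x)K(x,y)(f(x)-f(y))²`. -/
def poincare {X : Type*} [Fintype X] (K : X → X → ℝ) (π : X → ℝ) : ℝ :=
  sSup {γ : ℝ | ∀ f : X → ℝ, γ * varPi π f ≤ (∑ x, ∑ y, π x * K x y * (f x - f y) ^ 2) / 2}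

/-- Smallest non-zero entry of `K`. -/
def minEntry {X : Type*} [Fintype X] (K : X → X → ℝ) : ℝ :=
  sInf {v : ℝ | (∃ x y, v = K x y) ∧ 0 < v}

/-- Smallest stationary probability `p = min_x π(x)`. -/
def statMin {X : Type*} [Fintype X] (π : X → ℝ) : ℝ :=
  sInf {v : ℝ | ∃ x, v = π x}

/-- The support of `K` is symmetric. -/
def SymmSupport {X : Type*} (K : X → X → ℝ) : Prop :=
  ∀ x y, 0 < K x y → 0 < K y x

/-- Graph distance associated with the support of `K`. -/
def mdist {X : Type*} [Fintype X] [DecidableEq X] (K : X → X → ℝ) (x y : X) : ℕ :=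
  sInf {n : ℕ | 0 < matPow K n x y}

/-- Diameter of the state space for the distance `mdist`. -/
def mdiam {X : Type*} [Fintype X] [DecidableEq X] (K : X → X → ℝ) : ℕ :=
  Finset.sup Finset.univ fun p : X × X => mdist K p.1 p.2

/-- Lipschitz norm of `f` with respect to `mdist`. -/
def lipNorm {X : Type*} [Fintype X] [DecidableEq X] (K : X → X → ℝ) (f : X → ℝ) : ℝ :=
  sSup {v : ℝ | ∃ x y, x ≠ y ∧ v = |f x - f y| / (mdist K x y : ℝ)}

open scoped Nat

section MatPow

variable {X : Type*} [Fintype X] [DecidableEq X] {K : X → X → ℝ}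

lemma matPow_apply_eq_pow (n : ℕ) (x y : X) : matPow K n x y = (Matrix.of K ^ n) x y := by
  induction n generalizing y with
  | zero => simp [matPow, Matrix.one_apply]
  | succ n ih => simp [matPow, pow_succ, Matrix.mul_apply, ih]

lemma matPow_one (x y : X) : matPow K 1 x y = K x y := by
  simp [matPow_apply_eq_pow]

lemma matPow_add_apply (a b : ℕ) (x y : X) :
    matPow K (a + b) x y = ∑ z, matPow K a x z * matPow K b z y := by
  simp only [matPow_apply_eq_pow, pow_add, Matrix.mul_apply]

lemma stationary_matPow {π : X → ℝ} (hπ : IsStationaryProb K π) (n : ℕ) (y : X) :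
    ∑ x, π x * matPow K n x y = π y := by
  induction n generalizing y with
  | zero => simp [matPow]
  | succ n ih =>
    simp only [matPow, Finset.mul_sum]
    rw [Finset.sum_comm]
    simp only [← mul_assoc, ← Finset.sum_mul, ih, hπ.2.2]

variable (hK : IsStochastic K)
include hK

lemma matPow_nonneg (n : ℕ) (x y : X) : 0 ≤ matPow K n x y := by
  induction n generalizing y with
  | zero => simp only [matPow]; split_ifs <;> norm_num
  | succ n ih => exact Finset.sum_nonneg fun z _ => mul_nonneg (ih z) (hK.1 z y).1

lemma matPow_row_sum (n : ℕ) (x : X) : ∑ y, matPow K n x y = 1 := by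
  induction n with
  | zero => simp [matPow]
  | succ n ih =>
    simp only [matPow]
    rw [Finset.sum_comm]
    simp only [← Finset.mul_sum, hK.2, mul_one, ih]

lemma matPow_le_one (n : ℕ) (x y : X) : matPow K n x y ≤ 1 :=
  matPow_row_sum hK n x ▸
    Finset.single_le_sum (fun z _ => matPow_nonneg hK n x z) (Finset.mem_univ y)

lemma matPow_mul_le_matPow_add (a b : ℕ) (x z y : X) :
    matPow K a x z * matPow K b z y ≤ matPow K (a + b) x y :=
  matPow_add_apply a b x y ▸
    Finset.single_le_sum (f := fun w => matPow K a x w * matPow K b w y)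
      (fun w _ => mul_nonneg (matPow_nonneg hK a x w) (matPow_nonneg hK b w y)) (Finset.mem_univ z)

lemma exists_pos_of_matPow_add_pos {a b : ℕ} {x y : X} (h : 0 < matPow K (a + b) x y) :
    ∃ z, 0 < matPow K a x z ∧ 0 < matPow K b z y := by
  rw [matPow_add_apply, Finset.sum_pos_iff_of_nonneg
    (fun w _ => mul_nonneg (matPow_nonneg hK a x w) (matPow_nonneg hK b w y))] at h
  obtain ⟨z, -, hz⟩ := h
  exact ⟨z, (pos_and_pos_or_neg_and_neg_of_mul_pos hz).resolve_right
    fun hneg => hneg.1.not_ge (matPow_nonneg hK a x z)⟩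

lemma matPow_pos_symm (hsym : SymmSupport K) {n : ℕ} {x y : X} (h : 0 < matPow K n x y) :
    0 < matPow K n y x := by
  induction n generalizing x y with
  | zero => simpa [matPow, eq_comm] using h
  | succ n ih =>
    obtain ⟨z, hxz, hzy⟩ := exists_pos_of_matPow_add_pos hK h
    rw [matPow_one] at hzy
    have hyz : 0 < matPow K 1 y z := by rw [matPow_one]; exact hsym z y hzy
    rw [add_comm]
    exact (mul_pos hyz (ih hxz)).trans_le (matPow_mul_le_matPow_add hK 1 n y z x)

end MatPow

section MinEntry

variable {X : Type*} [Fintype X] {K : X → X → ℝ}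

lemma finite_posEntries : {v : ℝ | (∃ x y, v = K x y) ∧ 0 < v}.Finite :=
  (Set.finite_range fun p : X × X => K p.1 p.2).subset fun _ ⟨⟨x, y, hv⟩, _⟩ => ⟨(x, y), hv.symm⟩

lemma minEntry_le {x y : X} (h : 0 < K x y) : minEntry K ≤ K x y :=
  csInf_le finite_posEntries.bddBelow ⟨⟨x, y, rfl⟩, h⟩

variable [Nonempty X] (hK : IsStochastic K)
include hK

lemma exists_minEntry_eq : ∃ x y, minEntry K = K x y ∧ 0 < K x y := by
  obtain ⟨x⟩ := ‹Nonempty X›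
  have hrow : 0 < ∑ y, K x y := by rw [hK.2 x]; exact one_pos
  obtain ⟨y, -, hy⟩ := (Finset.sum_pos_iff_of_nonneg fun y _ => (hK.1 x y).1).mp hrow
  obtain ⟨⟨x₀, y₀, heq⟩, hpos⟩ :=
    Set.Nonempty.csInf_mem (s := {v : ℝ | (∃ x y, v = K x y) ∧ 0 < v}) ⟨K x y, ⟨x, y, rfl⟩, hy⟩
      finite_posEntries
  exact ⟨x₀, y₀, heq, heq ▸ hpos⟩

lemma minEntry_pos : 0 < minEntry K := by
  obtain ⟨x, y, heq, hpos⟩ := exists_minEntry_eq hK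
  exact heq ▸ hpos

lemma minEntry_le_one : minEntry K ≤ 1 := by
  obtain ⟨x, y, heq, -⟩ := exists_minEntry_eq hK
  exact heq ▸ (hK.1 x y).2

variable [DecidableEq X]

lemma minEntry_pow_le_matPow {n : ℕ} {x y : X} (h : 0 < matPow K n x y) :
    minEntry K ^ n ≤ matPow K n x y := by
  induction n generalizing y with
  | zero =>
    rcases eq_or_ne x y with rfl | hxy
    · simp [matPow]
    · simp [matPow, hxy] at h
  | succ n ih =>
    obtain ⟨z, hxz, hzy⟩ := exists_pos_of_matPow_add_pos hK h
    have hδ : minEntry K ≤ matPow K 1 z y := by rw [matPow_one] at hzy ⊢; exact minEntry_le hzy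
    calc minEntry K ^ (n + 1) = minEntry K ^ n * minEntry K := pow_succ _ _
      _ ≤ matPow K n x z * matPow K 1 z y :=
          mul_le_mul (ih hxz) hδ (minEntry_pos hK).le (matPow_nonneg hK n x z)
      _ ≤ matPow K (n + 1) x y := matPow_mul_le_matPow_add hK n 1 x z y

lemma minEntry_pow_mul_le_of_matPow_pos {π : X → ℝ} (hπ : IsStationaryProb K π) {n : ℕ}
    {x y : X} (h : 0 < matPow K n x y) : minEntry K ^ n * π x ≤ π y :=
  calc minEntry K ^ n * π x ≤ π x * matPow K n x y := by
        rw [mul_comm]; exact mul_le_mul_of_nonneg_left (minEntry_pow_le_matPow hK h) (hπ.1 x).le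
    _ ≤ ∑ w, π w * matPow K n w y :=
        Finset.single_le_sum (f := fun w => π w * matPow K n w y)
          (fun w _ => mul_nonneg (hπ.1 w).le (matPow_nonneg hK n w y)) (Finset.mem_univ x)
    _ = π y := stationary_matPow hπ n y

end MinEntry

section Distance

variable {X : Type*} [Fintype X] [DecidableEq X] {K : X → X → ℝ}

lemma matPow_mdist_pos (hirr : IsIrreducibleMatrix K) (x y : X) :
    0 < matPow K (mdist K x y) x y :=
  Nat.sInf_mem (hirr x y)

lemma mdist_le_mdiam (x y : X) : mdist K x y ≤ mdiam K :=
  Finset.le_sup (f := fun p : X × X => mdist K p.1 p.2) (Finset.mem_univ (x, y))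

lemma mdist_pos (hirr : IsIrreducibleMatrix K) {x y : X} (hxy : x ≠ y) : 0 < mdist K x y := by
  refine Nat.pos_of_ne_zero fun h => ?_
  simpa [h, matPow, hxy] using matPow_mdist_pos hirr x y

lemma mdist_comm (hK : IsStochastic K) (hsym : SymmSupport K) (hirr : IsIrreducibleMatrix K)
    (x y : X) : mdist K x y = mdist K y x :=
  le_antisymm (Nat.sInf_le (matPow_pos_symm hK hsym (matPow_mdist_pos hirr y x)))
    (Nat.sInf_le (matPow_pos_symm hK hsym (matPow_mdist_pos hirr x y)))

end Distance

section ExpSeries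

lemma pow_div_factorial_le_pow {t : ℝ} (ht : 0 ≤ t) (M : ℕ) :
    t ^ M / M ! ≤ (Real.exp 1 * t / M) ^ M := by
  rcases M.eq_zero_or_pos with rfl | hM
  · simp
  have hMpos : (0 : ℝ) < M := by exact_mod_cast hM
  have hM_le : (M : ℝ) ^ M / M ! ≤ Real.exp 1 ^ M := by
    rw [← Real.exp_nat_mul, mul_one]
    exact Real.pow_div_factorial_le_exp _ hMpos.le M
  calc t ^ M / M ! = (t / M) ^ M * ((M : ℝ) ^ M / M !) := by
        rw [div_pow]; field_simp
    _ ≤ (t / M) ^ M * Real.exp 1 ^ M := by gcongr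
    _ = (Real.exp 1 * t / M) ^ M := by rw [← mul_pow]; ring

lemma tsum_pow_div_factorial_add_le {t : ℝ} (ht : 0 ≤ t) {M : ℕ} (htM : t < M) :
    ∑' i : ℕ, t ^ (i + M) / ((i + M)! : ℝ) ≤ t ^ M / M ! * (1 - t / M)⁻¹ := by
  have hMpos : (0 : ℝ) < M := ht.trans_lt htM
  have hr : t / M < 1 := (div_lt_one hMpos).mpr htM
  have hterm : ∀ i : ℕ, t ^ (i + M) / ((i + M)! : ℝ) ≤ t ^ M / M ! * (t / M) ^ i := by
    intro i
    have hfac : (M ! : ℝ) * (M : ℝ) ^ i ≤ (i + M)! := by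
      have := (Nat.mul_le_mul_left M ! (Nat.pow_le_pow_left M.le_succ i)).trans
        (Nat.factorial_mul_pow_le_factorial (m := M) (n := i))
      rw [add_comm i]
      exact_mod_cast this
    calc t ^ (i + M) / ((i + M)! : ℝ) ≤ t ^ (i + M) / (M ! * (M : ℝ) ^ i) := by gcongr
      _ = t ^ M / M ! * (t / M) ^ i := by rw [pow_add, div_pow]; field_simp
  have hgeom : Summable fun i : ℕ => t ^ M / M ! * (t / M) ^ i :=
    (summable_geometric_of_lt_one (by positivity) hr).mul_left _
  calc ∑' i : ℕ, t ^ (i + M) / ((i + M)! : ℝ) ≤ ∑' i : ℕ, t ^ M / M ! * (t / M) ^ i :=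
        Summable.tsum_le_tsum hterm (hgeom.of_nonneg_of_le (fun i => by positivity) hterm) hgeom
    _ = t ^ M / M ! * (1 - t / M)⁻¹ := by
        rw [tsum_mul_left, tsum_geometric_of_lt_one (by positivity) hr]

lemma one_div_four_pow_le_pow_div_factorial {t : ℝ} {r : ℕ} (hr : (r : ℝ) ≤ 4 * t) :
    (1 / 4 : ℝ) ^ r ≤ t ^ r / r ! := by
  rw [le_div_iff₀ (by positivity)]
  have hfac : (r ! : ℝ) ≤ (4 * t) ^ r :=
    calc (r ! : ℝ) ≤ (r : ℝ) ^ r := by exact_mod_cast Nat.factorial_le_pow r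
      _ ≤ (4 * t) ^ r := by gcongr
  calc (1 / 4 : ℝ) ^ r * r ! ≤ (1 / 4) ^ r * (4 * t) ^ r := by gcongr
    _ = t ^ r := by rw [← mul_pow]; ring_nf

lemma exists_nat_ge_div_and_mul_le {t δ : ℝ} (ht : 1 / 4 ≤ t) (hδ0 : 0 < δ) (hδ1 : δ ≤ 1) :
    ∃ M : ℕ, 15 * t / δ ≤ M ∧ δ * M ≤ 19 * t := by
  refine ⟨⌈15 * t / δ⌉₊, Nat.le_ceil _, ?_⟩
  have h := Nat.ceil_lt_add_one (show 0 ≤ 15 * t / δ by positivity)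
  rw [← sub_lt_iff_lt_add, lt_div_iff₀ hδ0] at h
  nlinarith

lemma pow_div_factorial_mul_inv_le_rpow {t δ : ℝ} (ht : 1 / 4 ≤ t) (hδ0 : 0 < δ) (hδ1 : δ ≤ 1)
    {M : ℕ} (hM : 15 * t / δ ≤ M) :
    t ^ M / M ! * (1 - t / M)⁻¹ ≤ (δ / 4) ^ (4 * t) / 25 := by
  have htpos : 0 < t := by linarith
  have hq0 : 0 < δ / 4 := by positivity
  have hq1 : δ / 4 ≤ 1 := by linarith
  have h15 : 15 * t ≤ M := (le_div_self (by positivity) hδ0 hδ1).trans hM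
  have hMpos : (0 : ℝ) < M := by linarith
  have hratio : t / M ≤ δ / 15 := by
    rw [div_le_div_iff₀ hMpos (by norm_num)]
    rw [div_le_iff₀ hδ0] at hM
    linarith
  have hgeom : (1 - t / M)⁻¹ ≤ 15 / 14 := by
    rw [inv_le_comm₀ (by linarith) (by norm_num)]
    linarith
  have hpow : t ^ M / M ! ≤ (δ / 4) ^ (15 * t) :=
    calc t ^ M / M ! ≤ (Real.exp 1 * t / M) ^ M := pow_div_factorial_le_pow htpos.le M
      _ ≤ (δ / 4) ^ M := by
          refine pow_le_pow_left₀ (by positivity) ?_ M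
          have he := Real.exp_one_lt_d9
          rw [mul_div_assoc]
          nlinarith [Real.exp_pos 1]
      _ = (δ / 4) ^ (M : ℝ) := (Real.rpow_natCast _ _).symm
      _ ≤ (δ / 4) ^ (15 * t) := Real.rpow_le_rpow_of_exponent_ge hq0 hq1 h15
  have hsplit : (δ / 4) ^ (15 * t) ≤ (δ / 4) ^ (4 * t) * (1 / 4) ^ (11 / 4 : ℝ) :=
    calc (δ / 4) ^ (15 * t) = (δ / 4) ^ (4 * t) * (δ / 4) ^ (11 * t) := by
          rw [← Real.rpow_add hq0]; ring_nf
      _ ≤ (δ / 4) ^ (4 * t) * (1 / 4) ^ (11 * t) := by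
          gcongr
      _ ≤ (δ / 4) ^ (4 * t) * (1 / 4) ^ (11 / 4 : ℝ) := by
          gcongr _ * ?_
          exact Real.rpow_le_rpow_of_exponent_ge (by norm_num) (by norm_num) (by linarith)
  have hnum : (1 / 4 : ℝ) ^ (11 / 4 : ℝ) ≤ 14 / 375 := by
    rw [← pow_le_pow_iff_left₀ (by positivity) (by norm_num) four_ne_zero,
      ← Real.rpow_mul_natCast (by norm_num)]
    norm_num
  calc t ^ M / M ! * (1 - t / M)⁻¹ ≤ (δ / 4) ^ (4 * t) * (1 / 4) ^ (11 / 4 : ℝ) * (15 / 14) :=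
        mul_le_mul (hpow.trans hsplit) hgeom (inv_nonneg.mpr (by linarith)) (by positivity)
    _ ≤ (δ / 4) ^ (4 * t) * (14 / 375) * (15 / 14) := by gcongr
    _ = (δ / 4) ^ (4 * t) / 25 := by ring

end ExpSeries

section HeatSeries

variable {X : Type*} [Fintype X] [DecidableEq X] {K : X → X → ℝ}

def heatSeries (K : X → X → ℝ) (t : ℝ) (o z : X) : ℝ :=
  ∑' n : ℕ, t ^ n / n ! * matPow K n o z

lemma heatKernel_eq_exp_mul_heatSeries (t : ℝ) (o z : X) :
    heatKernel K t o z = Real.exp (-t) * heatSeries K t o z := rfl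

variable (hK : IsStochastic K) {t : ℝ}
include hK

lemma summable_heatSeries (ht : 0 ≤ t) (o z : X) :
    Summable fun n : ℕ => t ^ n / n ! * matPow K n o z :=
  (Real.summable_pow_div_factorial t).of_nonneg_of_le
    (fun n => mul_nonneg (by positivity) (matPow_nonneg hK n o z))
    (fun n => mul_le_of_le_one_right (by positivity) (matPow_le_one hK n o z))

lemma le_heatSeries (ht : 0 ≤ t) (o z : X) (n : ℕ) :
    t ^ n / n ! * matPow K n o z ≤ heatSeries K t o z :=
  (summable_heatSeries hK ht o z).le_tsum n
    fun j _ => mul_nonneg (by positivity) (matPow_nonneg hK j o z)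

lemma heatSeries_pos (hirr : IsIrreducibleMatrix K) (ht : 0 < t) (o z : X) :
    0 < heatSeries K t o z :=
  (mul_pos (by positivity) (matPow_mdist_pos hirr o z)).trans_le (le_heatSeries hK ht.le o z _)

lemma heatSeries_le_sum_range_add (ht : 0 ≤ t) (o z : X) {M : ℕ} (htM : t < M) :
    heatSeries K t o z ≤
      ∑ n ∈ Finset.range M, t ^ n / n ! * matPow K n o z + t ^ M / M ! * (1 - t / M)⁻¹ := by
  rw [heatSeries, ← (summable_heatSeries hK ht o z).sum_add_tsum_nat_add M]
  gcongr
  calc ∑' i : ℕ, t ^ (i + M) / ((i + M)! : ℝ) * matPow K (i + M) o z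
      ≤ ∑' i : ℕ, t ^ (i + M) / ((i + M)! : ℝ) :=
        Summable.tsum_le_tsum
          (fun i => mul_le_of_le_one_right (by positivity) (matPow_le_one hK _ o z))
          ((summable_heatSeries hK ht o z).comp_injective (add_left_injective M))
          ((Real.summable_pow_div_factorial t).comp_injective (add_left_injective M))
    _ ≤ t ^ M / M ! * (1 - t / M)⁻¹ := tsum_pow_div_factorial_add_le ht htM

lemma mul_sum_range_le_heatSeries (ht : 0 ≤ t) (o : X) {z z' : X} (M : ℕ) :
    K z z' * (t / M) * ∑ n ∈ Finset.range M, t ^ n / n ! * matPow K n o z ≤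
      heatSeries K t o z' := by
  have hsum := summable_heatSeries hK ht o z'
  have hterm_nonneg : ∀ n, 0 ≤ t ^ n / n ! * matPow K n o z' :=
    fun n => mul_nonneg (by positivity) (matPow_nonneg hK n o z')
  have hterm : ∀ n ∈ Finset.range M, K z z' * (t / M) * (t ^ n / n ! * matPow K n o z) ≤
      t ^ (n + 1) / (n + 1)! * matPow K (n + 1) o z' := by
    intro n hn
    have hnM : (n : ℝ) + 1 ≤ M := by exact_mod_cast Finset.mem_range.mp hn
    have hstep : matPow K n o z * K z z' ≤ matPow K (n + 1) o z' := by
      simpa [matPow_one] using matPow_mul_le_matPow_add hK n 1 o z z'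
    have hcoef : t / M * (t ^ n / n !) ≤ t ^ (n + 1) / (n + 1)! :=
      calc t / M * (t ^ n / n !) ≤ t / (n + 1) * (t ^ n / n !) := by gcongr
        _ = t ^ (n + 1) / (n + 1)! := by
          rw [Nat.factorial_succ, Nat.cast_mul, pow_succ]; push_cast; field_simp
    calc K z z' * (t / M) * (t ^ n / n ! * matPow K n o z)
        = t / M * (t ^ n / n !) * (matPow K n o z * K z z') := by ring
      _ ≤ t ^ (n + 1) / (n + 1)! * matPow K (n + 1) o z' :=
          mul_le_mul hcoef hstep (mul_nonneg (matPow_nonneg hK n o z) (hK.1 z z').1)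
            (by positivity)
  calc K z z' * (t / M) * ∑ n ∈ Finset.range M, t ^ n / n ! * matPow K n o z
      ≤ ∑ n ∈ Finset.range M, t ^ (n + 1) / (n + 1)! * matPow K (n + 1) o z' := by
        rw [Finset.mul_sum]; exact Finset.sum_le_sum hterm
    _ ≤ ∑' n : ℕ, t ^ (n + 1) / (n + 1)! * matPow K (n + 1) o z' :=
        (hsum.comp_injective (add_left_injective 1)).sum_le_tsum _ fun n _ => hterm_nonneg _
    _ ≤ heatSeries K t o z' := by
        rw [heatSeries, hsum.tsum_eq_zero_add]
        exact le_add_of_nonneg_left (hterm_nonneg 0)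

variable [Nonempty X]

lemma rpow_le_heatSeries (hirr : IsIrreducibleMatrix K) (ht : 0 ≤ t) {o z : X}
    (hr : (mdist K o z : ℝ) ≤ 4 * t) : (minEntry K / 4) ^ (4 * t) ≤ heatSeries K t o z := by
  have hδ0 := minEntry_pos hK
  have hδ1 := minEntry_le_one hK
  calc (minEntry K / 4) ^ (4 * t) ≤ (minEntry K / 4) ^ (mdist K o z : ℝ) :=
        Real.rpow_le_rpow_of_exponent_ge (by positivity) (by linarith) hr
    _ = (1 / 4) ^ mdist K o z * minEntry K ^ mdist K o z := by
        rw [Real.rpow_natCast, ← mul_pow]; ring_nf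
    _ ≤ t ^ mdist K o z / (mdist K o z)! * matPow K (mdist K o z) o z :=
        mul_le_mul (one_div_four_pow_le_pow_div_factorial hr)
          (minEntry_pow_le_matPow hK (matPow_mdist_pos hirr o z)) (by positivity) (by positivity)
    _ ≤ heatSeries K t o z := le_heatSeries hK ht o z _

end HeatSeries

section Regularity

variable {X : Type*} [Fintype X] [DecidableEq X] [Nonempty X] {K : X → X → ℝ}
  (hK : IsStochastic K) (hirr : IsIrreducibleMatrix K) {t : ℝ}
include hK hirr

lemma heatSeries_le_mul_heatSeries_of_pos (ht : 1 / 4 ≤ t) {o z z' : X} (hzz' : 0 < K z z')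
    (hr : (mdist K o z : ℝ) ≤ 4 * t) :
    heatSeries K t o z ≤ Real.exp 1 ^ 3 / minEntry K ^ 2 * heatSeries K t o z' := by
  set δ := minEntry K
  have htpos : 0 < t := by linarith
  have hδ0 : 0 < δ := minEntry_pos hK
  have hδ1 : δ ≤ 1 := minEntry_le_one hK
  -- Truncating at `M ≥ 15 t / δ` costs at most `1/25` of the series, and `δ M ≤ 19 t`;
  -- the resulting constant `25 · 19 / 24` is just below `e³`.
  obtain ⟨M, hM, hδM⟩ := exists_nat_ge_div_and_mul_le ht hδ0 hδ1
  have htM : t < M := by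
    have : t < 15 * t / δ := by rw [lt_div_iff₀ hδ0]; nlinarith
    linarith
  have hF' : 0 ≤ heatSeries K t o z' := (heatSeries_pos hK hirr htpos o z').le
  set S := ∑ n ∈ Finset.range M, t ^ n / n ! * matPow K n o z
  have hS : 0 ≤ S := Finset.sum_nonneg fun n _ => mul_nonneg (by positivity) (matPow_nonneg hK n o z)
  have hgain : δ * (t / M) * S ≤ heatSeries K t o z' :=
    (mul_le_mul_of_nonneg_right (by gcongr; exact minEntry_le hzz') hS).trans
      (mul_sum_range_le_heatSeries hK htpos.le o M)
  have htail : heatSeries K t o z ≤ S + heatSeries K t o z / 25 :=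
    (heatSeries_le_sum_range_add hK htpos.le o z htM).trans <| add_le_add le_rfl
      ((pow_div_factorial_mul_inv_le_rpow ht hδ0 hδ1 hM).trans <|
        div_le_div_of_nonneg_right (rpow_le_heatSeries hK hirr htpos.le hr) (by norm_num))
  have hS_le : δ ^ 2 * S ≤ 19 * heatSeries K t o z' := by
    have hMpos : (0 : ℝ) < M := htpos.trans htM
    have h1 : δ * t * S ≤ M * heatSeries K t o z' := by
      have : δ * t * S = M * (δ * (t / M) * S) := by field_simp
      rw [this]; gcongr
    have h2 : t * (δ ^ 2 * S) ≤ t * (19 * heatSeries K t o z') := by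
      nlinarith [mul_le_mul_of_nonneg_left h1 hδ0.le]
    exact le_of_mul_le_mul_left h2 htpos
  have he : (475 : ℝ) / 24 ≤ Real.exp 1 ^ 3 :=
    le_trans (by norm_num) (pow_le_pow_left₀ (by norm_num) Real.exp_one_gt_d9.le 3)
  have hF : heatSeries K t o z ≤ 25 / 24 * S := by linarith
  rw [div_mul_eq_mul_div, le_div_iff₀ (by positivity)]
  calc heatSeries K t o z * δ ^ 2 ≤ 25 / 24 * (δ ^ 2 * S) := by nlinarith
    _ ≤ 25 / 24 * (19 * heatSeries K t o z') := by gcongr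
    _ = 475 / 24 * heatSeries K t o z' := by ring
    _ ≤ Real.exp 1 ^ 3 * heatSeries K t o z' := by gcongr

lemma heatSeries_le_pow_mul_of_matPow_pos (ht : 1 / 4 ≤ t) (hdiam : (mdiam K : ℝ) ≤ 4 * t)
    (o : X) {n : ℕ} {x y : X} (h : 0 < matPow K n x y) :
    heatSeries K t o x ≤ (Real.exp 1 ^ 3 / minEntry K ^ 2) ^ n * heatSeries K t o y := by
  induction n generalizing y with
  | zero =>
    rcases eq_or_ne x y with rfl | hxy
    · simp
    · simp [matPow, hxy] at h
  | succ n ih =>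
    obtain ⟨w, hxw, hwy⟩ := exists_pos_of_matPow_add_pos hK h
    rw [matPow_one] at hwy
    have hr : (mdist K o w : ℝ) ≤ 4 * t := le_trans (by exact_mod_cast mdist_le_mdiam o w) hdiam
    calc heatSeries K t o x ≤ (Real.exp 1 ^ 3 / minEntry K ^ 2) ^ n * heatSeries K t o w := ih hxw
      _ ≤ (Real.exp 1 ^ 3 / minEntry K ^ 2) ^ n *
            (Real.exp 1 ^ 3 / minEntry K ^ 2 * heatSeries K t o y) := by
          gcongr; exact heatSeries_le_mul_heatSeries_of_pos hK hirr ht hwy hr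
      _ = (Real.exp 1 ^ 3 / minEntry K ^ 2) ^ (n + 1) * heatSeries K t o y := by ring

lemma heatKernel_div_le_pow_mul {π : X → ℝ} (hπ : IsStationaryProb K π) (ht : 1 / 4 ≤ t)
    (hdiam : (mdiam K : ℝ) ≤ 4 * t) (o : X) {d : ℕ} {x y : X} (hxy : 0 < matPow K d x y)
    (hyx : 0 < matPow K d y x) :
    heatKernel K t o x / π x ≤ (Real.exp 1 / minEntry K) ^ (3 * d) * (heatKernel K t o y / π y) := by
  have hδ0 := minEntry_pos hK
  have hπy := hπ.1 y
  have hF := heatSeries_le_pow_mul_of_matPow_pos hK hirr ht hdiam o hxy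
  have hπ_le := minEntry_pow_mul_le_of_matPow_pos hK hπ hyx
  have hFy : 0 ≤ heatSeries K t o y := (heatSeries_pos hK hirr (by linarith) o y).le
  simp only [heatKernel_eq_exp_mul_heatSeries]
  calc Real.exp (-t) * heatSeries K t o x / π x
      ≤ Real.exp (-t) * ((Real.exp 1 ^ 3 / minEntry K ^ 2) ^ d * heatSeries K t o y) /
          (minEntry K ^ d * π y) := by gcongr
    _ = (Real.exp 1 / minEntry K) ^ (3 * d) * (Real.exp (-t) * heatSeries K t o y / π y) := by
        have hC : (Real.exp 1 / minEntry K) ^ (3 * d) =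
            (Real.exp 1 ^ 3 / minEntry K ^ 2) ^ d / minEntry K ^ d := by
          rw [pow_mul, ← div_pow]
          ring
        rw [hC]
        ring

lemma log_heatKernel_div_sub_le (hsym : SymmSupport K) {π : X → ℝ} (hπ : IsStationaryProb K π)
    (ht : 1 / 4 ≤ t) (hdiam : (mdiam K : ℝ) ≤ 4 * t) (o x y : X) :
    Real.log (heatKernel K t o x / π x) - Real.log (heatKernel K t o y / π y) ≤
      3 * Real.log (Real.exp 1 / minEntry K) * mdist K x y := by
  have hyx : 0 < matPow K (mdist K x y) y x :=
    mdist_comm hK hsym hirr x y ▸ matPow_mdist_pos hirr y x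
  have hpos : ∀ w, 0 < heatKernel K t o w / π w := fun w =>
    div_pos (mul_pos (Real.exp_pos _) (heatSeries_pos hK hirr (by linarith) o w)) (hπ.1 w)
  have h := Real.log_le_log (hpos x)
    (heatKernel_div_le_pow_mul hK hirr hπ ht hdiam o (matPow_mdist_pos hirr x y) hyx)
  rw [Real.log_mul (pow_pos (div_pos (Real.exp_pos 1) (minEntry_pos hK)) _).ne' (hpos y).ne',
    Real.log_pow] at h
  push_cast at h
  linarith

end Regularity

/-- Spatial regularity of the heat kernel. -/
theorem stmt_7 {X : Type*} [Fintype X] [DecidableEq X]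
    (hcard : 2 ≤ Fintype.card X)
    (K : X → X → ℝ) (π : X → ℝ)
    (hK : IsStochastic K) (hirr : IsIrreducibleMatrix K) (hπ : IsStationaryProb K π)
    (hsym : SymmSupport K)
    (o : X) (t : ℝ) (ht : (mdiam K : ℝ) / 4 ≤ t) :
    lipNorm K (fun x => Real.log (heatKernel K t o x / π x)) ≤
      3 * Real.log (Real.exp 1 / minEntry K) := by
  obtain ⟨x₀, y₀, hne⟩ := Fintype.exists_pair_of_one_lt_card hcard
  have : Nonempty X := ⟨x₀⟩
  have hdiam : (1 : ℝ) ≤ mdiam K := by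
    exact_mod_cast (mdist_pos hirr hne).trans_le (mdist_le_mdiam x₀ y₀)
  have ht' : 1 / 4 ≤ t := by linarith
  have hbound : 0 ≤ 3 * Real.log (Real.exp 1 / minEntry K) :=
    mul_nonneg (by norm_num) <| Real.log_nonneg <| (one_le_div (minEntry_pos hK)).mpr <|
      (minEntry_le_one hK).trans (Real.one_le_exp zero_le_one)
  refine Real.sSup_le ?_ hbound
  rintro v ⟨x, y, hxy, rfl⟩
  rw [div_le_iff₀ (by exact_mod_cast mdist_pos hirr hxy), abs_sub_le_iff]
  constructor
  · exact log_heatKernel_div_sub_le hK hirr hsym hπ ht' (by linarith) o x y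
  · rw [mdist_comm hK hsym hirr]
    exact log_heatKernel_div_sub_le hK hirr hsym hπ ht' (by linarith) o y x
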